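/- Let K ⊆ Stoch(A,A') and M ⊆ Stoch(B,B') be convex. Then every locally-applicable transformation S : K → M on Stoch extends to a well-defined function S_{Mat[ℝ₊]} : K_{Mat[ℝ₊]} → M_{Mat[ℝ₊]} via S_{Mat[ℝ₊]}((id_{A'} ⊗ σ) · Φ · (id_A ⊗ ρ)) := (id_{B'} ⊗ σ) · S_{X,X'}(Φ) · (id_B ⊗ ρ); that is, whenever two such representations yield the same element of K_{Mat[ℝ₊]}, the corresponding images agree. -/

import Mathlib

noncomputable section
open scoped Kronecker
attribute [local instance] Classical.propDecidable
attribute [local instance] FintypeCat.fintype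

/-- Entrywise nonnegativity: a morphism of `Mat[ℝ₊]`. -/
def Nonneg {m n : Type} (f : Matrix m n ℝ) : Prop := ∀ i j, 0 ≤ f i j

/-- A column-stochastic matrix: a morphism of `Stoch`. -/
def IsStoch {m n : Type} [Fintype m] (f : Matrix m n ℝ) : Prop :=
  Nonneg f ∧ ∀ j, ∑ i, f i j = 1

/-- A probability vector. -/
def IsProb {X : Type} [Fintype X] (ρ : X → ℝ) : Prop :=
  (∀ x, 0 ≤ ρ x) ∧ ∑ x, ρ x = 1

/-- Reduction of an extended map by a (generalised) state `ρ` on the input ancilla and a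
(generalised) effect `σ` on the output ancilla. -/
def margE {A A' X X' : Type} [Fintype X] [Fintype X'] (Φ : Matrix (A' × X') (A × X) ℝ)
    (ρ : X → ℝ) (σ : X' → ℝ) : Matrix A' A ℝ :=
  Matrix.of fun a' a => ∑ x' : X', ∑ x : X, σ x' * Φ (a', x') (a, x) * ρ x

/-- Reduction by a state on the input ancilla and the discard on the output ancilla. -/
def marg {A A' X X' : Type} [Fintype X] [Fintype X'] (Φ : Matrix (A' × X') (A × X) ℝ)
    (ρ : X → ℝ) : Matrix A' A ℝ :=
  margE Φ ρ (fun _ => 1)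

/-- The dilation extension of a set `K ⊆ Stoch(A,A')` by ancillas `X, X'`. -/
def dExtS {A A' : Type} [Fintype A'] (K : Set (Matrix A' A ℝ))
    (X X' : Type) [Fintype X] [Fintype X'] : Set (Matrix (A' × X') (A × X) ℝ) :=
  {Φ | IsStoch Φ ∧ ∀ ρ : X → ℝ, IsProb ρ → marg Φ ρ ∈ K}

/-- Closure under convex combinations. -/
def IsConvexSetS {A A' : Type} (K : Set (Matrix A' A ℝ)) : Prop :=
  ∀ φ₀ ∈ K, ∀ φ₁ ∈ K, ∀ p : ℝ, 0 ≤ p → p ≤ 1 → (p • φ₀ + (1 - p) • φ₁) ∈ K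

/-- A normal set: one containing every discard-prepare map. -/
def IsNormalSetS {A A' : Type} [Fintype A'] (K : Set (Matrix A' A ℝ)) : Prop :=
  ∀ ρ : A' → ℝ, IsProb ρ → (Matrix.of fun a' (_ : A) => ρ a') ∈ K

/-- `(id_{A'} ⊗ g) · (Φ ⊗ id_Z) · (id_A ⊗ f)`, suppressing associativity isomorphisms. -/
def slideS {A A' X X' Y Y' Z : Type} [Fintype A] [Fintype A'] [Fintype X] [Fintype X']
    [Fintype Y] [Fintype Y'] [Fintype Z]
    (f : Matrix (X × Z) Y ℝ) (g : Matrix Y' (X' × Z) ℝ)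
    (Φ : Matrix (A' × X') (A × X) ℝ) : Matrix (A' × Y') (A × Y) ℝ :=
  ((1 : Matrix A' A' ℝ) ⊗ₖ g) *
    (Matrix.reindex (Equiv.prodAssoc A' X' Z) (Equiv.prodAssoc A X Z)
      (Φ ⊗ₖ (1 : Matrix Z Z ℝ))) *
    ((1 : Matrix A A ℝ) ⊗ₖ f)

/-- A locally-applicable transformation of type `K → M` on `Stoch`. -/
structure LocAppS {A A' B B' : Type} [Fintype A] [Fintype A'] [Fintype B] [Fintype B']
    (K : Set (Matrix A' A ℝ)) (M : Set (Matrix B' B ℝ)) where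
  app : ∀ (X X' : FintypeCat.{0}), ↥(dExtS K X X') → ↥(dExtS M X X')
  natural : ∀ (X X' Y Y' Z : FintypeCat.{0})
      (f : Matrix (X × Z) Y ℝ) (g : Matrix Y' (X' × Z) ℝ),
      IsStoch f → IsStoch g →
      ∀ (Φ : ↥(dExtS K X X')) (h : slideS f g Φ.1 ∈ dExtS K Y Y'),
        (app Y Y' ⟨slideS f g Φ.1, h⟩).1 = slideS f g (app X X' Φ).1

/-- Reduction of a doubly-extended map by a state on the control ancilla and the discard
on its output. -/
def margCtrl {A A' X X' Y Y' : Type} [Fintype Y] [Fintype Y']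
    (Φ : Matrix (A' × (X' × Y')) (A × (X × Y)) ℝ) (ρ : Y → ℝ) :
    Matrix (A' × X') (A × X) ℝ :=
  Matrix.of fun p q => ∑ y' : Y', ∑ y : Y, Φ (p.1, (p.2, y')) (q.1, (q.2, y)) * ρ y

/-- A set `K ⊆ Stoch(A,A')` has control if any two members of a common dilation extension
arise as reductions of a single member by a pair of probability vectors. -/
def HasControlS {A A' : Type} [Fintype A] [Fintype A'] (K : Set (Matrix A' A ℝ)) : Prop :=
  ∀ (X X' : FintypeCat.{0}), ∀ φ₀ ∈ dExtS K X X', ∀ φ₁ ∈ dExtS K X X',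
    ∃ (Y Y' : FintypeCat.{0}) (Φ : Matrix (A' × (X' × Y')) (A × (X × Y)) ℝ)
      (ρ₀ ρ₁ : Y → ℝ),
      Φ ∈ dExtS K (X × Y) (X' × Y') ∧ IsProb ρ₀ ∧ IsProb ρ₁ ∧
      margCtrl Φ ρ₀ = φ₀ ∧ margCtrl Φ ρ₁ = φ₁

/-- The action of a `Mat[ℝ₊]`-supermap `S` (acting on vectorizations) on an extended
morphism, by tensor extension with the identity via the compact structure. -/
def supActS {A A' B B' X X' : Type} [Fintype A] [Fintype A']
    (S : Matrix (B × B') (A × A') ℝ) (Φ : Matrix (A' × X') (A × X) ℝ) :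
    Matrix (B' × X') (B × X) ℝ :=
  Matrix.of fun p q => ∑ a : A, ∑ a' : A', S (q.1, p.1) (a, a') * Φ (a', p.2) (a, q.2)

/-- A `Mat[ℝ₊]`-supermap of type `K → M` on `Stoch`. -/
def IsSupermapS {A A' B B' : Type} [Fintype A] [Fintype A'] [Fintype B']
    (K : Set (Matrix A' A ℝ)) (M : Set (Matrix B' B ℝ))
    (S : Matrix (B × B') (A × A') ℝ) : Prop :=
  Nonneg S ∧ ∀ (X X' : FintypeCat.{0}), ∀ Φ ∈ dExtS K X X', supActS S Φ ∈ dExtS M X X'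

/-!
Naturality lets every reduction be computed on a single ancilla shape. Preparing the normalised
state `ρ / ∑ ρ` and measuring the two-outcome test that accepts with probability `(∑ ρ) σ / t`
turns `Φ` into a dilation `Ψ` with ancillas `Unit → Bool` whose accepted branch is
`margE Φ ρ σ / t`, and turns `S Φ` into `S Ψ` in the same way. Choosing one `t` for both sides,
it suffices that the accepted branch of `S Ψ` depends only on that of `Ψ`.

Given `Ψ₀, Ψ₁` with equal accepted branches, convexity of `K` makes the bit-controlled choice `Ω`
between them a dilation of `K`. Feed `Ω` a uniformly random control bit and record a copy of it:
flipping the record whenever the outcome is accepted leaves this dilation unchanged, because the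
accepted branch does not see the control. Naturality transports the symmetry to `S`, so the
accepted branch of `S Ω` does not depend on the control either.

When `∑ ρ = 0` both reductions vanish; otherwise a vanishing reduction gives a `Ψ` that is fixed
by merging both outcomes into rejection, and then so is `S Ψ`.
-/

lemma isStoch_one {n : Type} [Fintype n] [DecidableEq n] : IsStoch (1 : Matrix n n ℝ) :=
  ⟨fun i j => by by_cases h : i = j <;> simp [Matrix.one_apply, h],
    fun j => by simp [Matrix.one_apply]⟩

lemma IsStoch.mul {m n p : Type} [Fintype m] [Fintype n] {f : Matrix m n ℝ} {g : Matrix n p ℝ}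
    (hf : IsStoch f) (hg : IsStoch g) : IsStoch (f * g) := by
  refine ⟨fun i j => Finset.sum_nonneg fun k _ => mul_nonneg (hf.1 _ _) (hg.1 _ _), fun j => ?_⟩
  simp only [Matrix.mul_apply]
  rw [Finset.sum_comm]
  simp only [← Finset.sum_mul, hf.2, one_mul, hg.2]

lemma IsStoch.kronecker {m n m' n' : Type} [Fintype m] [Fintype m'] {f : Matrix m n ℝ}
    {g : Matrix m' n' ℝ} (hf : IsStoch f) (hg : IsStoch g) : IsStoch (f ⊗ₖ g) := by
  refine ⟨fun i j => mul_nonneg (hf.1 _ _) (hg.1 _ _), fun j => ?_⟩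
  simp only [Fintype.sum_prod_type, Matrix.kroneckerMap_apply, ← Finset.mul_sum, hg.2, mul_one,
    hf.2]

lemma IsStoch.reindex {m n m' n' : Type} [Fintype m] [Fintype m'] {f : Matrix m n ℝ}
    (hf : IsStoch f) (e₁ : m ≃ m') (e₂ : n ≃ n') : IsStoch (Matrix.reindex e₁ e₂ f) :=
  ⟨fun _ _ => hf.1 _ _, fun j => by
    rw [← hf.2 (e₂.symm j)]
    exact Fintype.sum_equiv e₁.symm _ _ fun _ => rfl⟩

lemma IsProb.mulVec {m n : Type} [Fintype m] [Fintype n] {f : Matrix m n ℝ} {ρ : n → ℝ}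
    (hf : IsStoch f) (hρ : IsProb ρ) : IsProb (f.mulVec ρ) := by
  refine ⟨fun i => Finset.sum_nonneg fun j _ => mul_nonneg (hf.1 i j) (hρ.1 j), ?_⟩
  simp only [Matrix.mulVec, dotProduct]
  rw [Finset.sum_comm]
  simp only [← Finset.sum_mul, hf.2, one_mul, hρ.2]

lemma IsProb.sum_snd {X Z : Type} [Fintype X] [Fintype Z] {p : X × Z → ℝ} (hp : IsProb p) :
    IsProb fun x => ∑ z, p (x, z) :=
  ⟨fun x => Finset.sum_nonneg fun z _ => hp.1 _, by rw [← hp.2, Fintype.sum_prod_type]⟩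

lemma margE_eq_zero_of_sum_eq_zero {A A' X X' : Type} [Fintype X] [Fintype X']
    (Φ : Matrix (A' × X') (A × X) ℝ) {ρ : X → ℝ} (hρ : ∀ x, 0 ≤ ρ x) (h : ∑ x, ρ x = 0)
    (σ : X' → ℝ) : margE Φ ρ σ = 0 := by
  have hρ0 := (Finset.sum_eq_zero_iff_of_nonneg fun x _ => hρ x).1 h
  ext a' a
  simp [margE, hρ0]

lemma margE_smul_smul {A A' X X' : Type} [Fintype X] [Fintype X']
    (Φ : Matrix (A' × X') (A × X) ℝ) (ρ : X → ℝ) (σ : X' → ℝ) (c d : ℝ) :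
    margE Φ (c • ρ) (d • σ) = (c * d) • margE Φ ρ σ := by
  ext a' a
  simp only [margE, Matrix.of_apply, Matrix.smul_apply, Pi.smul_apply, smul_eq_mul,
    Finset.mul_sum]
  exact Finset.sum_congr rfl fun _ _ => Finset.sum_congr rfl fun _ _ => by ring

def detMat {α β : Type} (φ : α → β) : Matrix β α ℝ :=
  Matrix.of fun b a => if b = φ a then 1 else 0

lemma isStoch_detMat {α β : Type} [Fintype β] (φ : α → β) : IsStoch (detMat φ) :=
  ⟨fun b a => by simp only [detMat, Matrix.of_apply]; positivity, fun a => by simp [detMat]⟩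

section Slide

variable {A A' X X' Y Y' Z : Type} [Fintype A] [Fintype A'] [Fintype X] [Fintype X']
  [Fintype Y] [Fintype Y'] [Fintype Z]

lemma slideS_apply (f : Matrix (X × Z) Y ℝ) (g : Matrix Y' (X' × Z) ℝ)
    (Φ : Matrix (A' × X') (A × X) ℝ) (a' : A') (y' : Y') (a : A) (y : Y) :
    slideS f g Φ (a', y') (a, y) =
      ∑ x' : X', ∑ z : Z, ∑ x : X, g y' (x', z) * Φ (a', x') (a, x) * f (x, z) y := by
  simp only [slideS, Matrix.mul_apply, Matrix.kroneckerMap_apply, Matrix.reindex_apply,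
    Matrix.submatrix_apply, Matrix.one_apply, Fintype.sum_prod_type, Equiv.prodAssoc_symm_apply,
    ite_mul, mul_ite, mul_zero, zero_mul, mul_one, one_mul, Finset.sum_ite_eq, Finset.sum_ite_eq',
    Finset.sum_ite_irrel, Finset.sum_const_zero, Finset.mem_univ, if_true, Finset.sum_mul]
  simp only [Finset.sum_comm (s := (Finset.univ : Finset X))]
  simp only [Finset.sum_comm (s := (Finset.univ : Finset Z))]

lemma slideS_detMat_apply (φ : Y → X × Z) (ψ : X' × Z → Y')
    (Φ : Matrix (A' × X') (A × X) ℝ) (a' : A') (y' : Y') (a : A) (y : Y) :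
    slideS (detMat φ) (detMat ψ) Φ (a', y') (a, y) =
      ∑ x', if y' = ψ (x', (φ y).2) then Φ (a', x') (a, (φ y).1) else 0 := by
  rw [slideS_apply]
  refine Finset.sum_congr rfl fun x' _ => ?_
  rw [Finset.sum_comm, ← Fintype.sum_prod_type' (f := fun x z =>
    detMat ψ y' (x', z) * Φ (a', x') (a, x) * detMat φ (x, z) y)]
  simp [detMat]

lemma IsStoch.slideS {f : Matrix (X × Z) Y ℝ} {g : Matrix Y' (X' × Z) ℝ}
    {Φ : Matrix (A' × X') (A × X) ℝ} (hΦ : IsStoch Φ) (hf : IsStoch f) (hg : IsStoch g) :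
    IsStoch (slideS f g Φ) :=
  ((isStoch_one.kronecker hg).mul ((hΦ.kronecker isStoch_one).reindex _ _)).mul
    (isStoch_one.kronecker hf)

lemma marg_slideS (f : Matrix (X × Z) Y ℝ) {g : Matrix Y' (X' × Z) ℝ} (hg : IsStoch g)
    (Φ : Matrix (A' × X') (A × X) ℝ) (ρ : Y → ℝ) :
    marg (slideS f g Φ) ρ = marg Φ (fun x => ∑ z, f.mulVec ρ (x, z)) := by
  ext a' a
  simp only [marg, margE, Matrix.of_apply, one_mul, slideS_apply, Matrix.mulVec, dotProduct,
    Finset.sum_mul, Finset.mul_sum]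
  simp only [Finset.sum_comm (s := (Finset.univ : Finset Y')), ← Finset.sum_mul, hg.2, one_mul]
  simp only [Finset.sum_mul, mul_assoc, Finset.sum_comm (s := (Finset.univ : Finset Y))]
  simp only [Finset.sum_comm (s := (Finset.univ : Finset Z))]

lemma slideS_mem_dExtS {K : Set (Matrix A' A ℝ)} {f : Matrix (X × Z) Y ℝ}
    {g : Matrix Y' (X' × Z) ℝ} {Φ : Matrix (A' × X') (A × X) ℝ}
    (hΦ : Φ ∈ dExtS K X X') (hf : IsStoch f) (hg : IsStoch g) : slideS f g Φ ∈ dExtS K Y Y' :=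
  ⟨hΦ.1.slideS hf hg, fun ρ hρ => by
    rw [marg_slideS f hg]
    exact hΦ.2 _ (hρ.mulVec hf).sum_snd⟩

end Slide

lemma LocAppS.app_slideS {A A' B B' : FintypeCat.{0}} {K : Set (Matrix A' A ℝ)}
    {M : Set (Matrix B' B ℝ)} (S : LocAppS K M) {X X' Y Y' Z : FintypeCat.{0}}
    {f : Matrix (X × Z) Y ℝ} {g : Matrix Y' (X' × Z) ℝ} (hf : IsStoch f) (hg : IsStoch g)
    (Φ : dExtS K X X') (Ψ : dExtS K Y Y') (hΨ : Ψ.1 = slideS f g Φ.1) :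
    (S.app Y Y' Ψ).1 = slideS f g (S.app X X' Φ).1 := by
  obtain ⟨Ψ, hmem⟩ := Ψ
  subst hΨ
  exact S.natural X X' Y Y' Z f g hf hg Φ hmem

-- Objects of `FintypeCat` carry the instance `Fintype.ofFinite`, which is not defeq to
-- `Bool.fintype` and its kin; these instances give the concrete ancillas that same one.
instance Unit.fintypeOfFinite : Fintype Unit := Fintype.ofFinite Unit

instance Bool.fintypeOfFinite : Fintype Bool := Fintype.ofFinite Bool

instance Bool.fintypeProdOfFinite : Fintype (Bool × Bool) := Fintype.ofFinite (Bool × Bool)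

lemma Fintype.sum_bool' {β : Type} [AddCommMonoid β] [inst : Fintype Bool] (f : Bool → β) :
    ∑ b, f b = f true + f false := by
  obtain rfl : inst = Bool.fintype := Subsingleton.elim _ _
  exact Fintype.sum_bool f

section Ancillas

variable {A A' X' : Type}

def uniformCopy (X : Type) [Fintype X] : Matrix (X × X) Unit ℝ :=
  Matrix.of fun p _ => if p.1 = p.2 then (Fintype.card X : ℝ)⁻¹ else 0

lemma isStoch_uniformCopy (X : Type) [Fintype X] [Nonempty X] : IsStoch (uniformCopy X) :=
  ⟨fun p _ => by simp only [uniformCopy, Matrix.of_apply]; positivity,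
    fun _ => by simp [uniformCopy, Fintype.sum_prod_type]⟩

def condFlip (p : Bool × Bool) : Bool × Bool := (p.1, xor p.1 p.2)

lemma condFlip_involutive : Function.Involutive condFlip := by
  rintro ⟨_ | _, _ | _⟩ <;> rfl

def accepted (Ψ : Matrix (A' × Bool) (A × Unit) ℝ) : Matrix A' A ℝ :=
  Matrix.of fun a' a => Ψ (a', true) (a, ())

def controlled (Ψ₀ Ψ₁ : Matrix (A' × X') (A × Unit) ℝ) : Matrix (A' × X') (A × Bool) ℝ :=
  Matrix.of fun p q => cond q.2 (Ψ₁ p (q.1, ())) (Ψ₀ p (q.1, ()))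

lemma marg_controlled [Fintype X'] (Ψ₀ Ψ₁ : Matrix (A' × X') (A × Unit) ℝ) (ρ : Bool → ℝ) :
    marg (controlled Ψ₀ Ψ₁) ρ = ρ false • marg Ψ₀ 1 + ρ true • marg Ψ₁ 1 := by
  ext a' a
  simp only [marg, margE, controlled, Matrix.of_apply, Matrix.add_apply, Matrix.smul_apply,
    smul_eq_mul, Fintype.sum_bool', Fintype.sum_unique, Finset.mul_sum, Pi.one_apply, cond_true,
    cond_false]
  rw [← Finset.sum_add_distrib]
  exact Finset.sum_congr rfl fun _ _ => by ring

lemma IsStoch.controlled [Fintype A'] [Fintype X'] {Ψ₀ Ψ₁ : Matrix (A' × X') (A × Unit) ℝ}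
    (h₀ : IsStoch Ψ₀) (h₁ : IsStoch Ψ₁) : IsStoch (controlled Ψ₀ Ψ₁) := by
  constructor
  · rintro p ⟨a, (_ | _)⟩
    exacts [h₀.1 _ _, h₁.1 _ _]
  · rintro ⟨a, (_ | _)⟩
    exacts [h₀.2 _, h₁.2 _]

lemma controlled_mem_dExtS [Fintype A'] [Fintype X'] {K : Set (Matrix A' A ℝ)}
    (hK : IsConvexSetS K) {Ψ₀ Ψ₁ : Matrix (A' × X') (A × Unit) ℝ} (h₀ : Ψ₀ ∈ dExtS K Unit X')
    (h₁ : Ψ₁ ∈ dExtS K Unit X') : controlled Ψ₀ Ψ₁ ∈ dExtS K Bool X' := by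
  refine ⟨h₀.1.controlled h₁.1, fun ρ hρ => ?_⟩
  have hunit : IsProb (1 : Unit → ℝ) := ⟨fun _ => zero_le_one, by simp⟩
  have hsum : ρ true = 1 - ρ false := by linarith [hρ.2, Fintype.sum_bool' ρ]
  rw [marg_controlled, hsum]
  exact hK _ (h₀.2 1 hunit) _ (h₁.2 1 hunit) _ (hρ.1 false) (by linarith [hρ.1 true])

def prepare {X : Type} (p : X → ℝ) : Matrix (X × Unit) Unit ℝ := Matrix.of fun q _ => p q.1

def test (τ : X' → ℝ) : Matrix Bool (X' × Unit) ℝ :=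
  Matrix.of fun b q => if b then τ q.1 else 1 - τ q.1

lemma isStoch_prepare {X : Type} [Fintype X] {p : X → ℝ} (hp : IsProb p) :
    IsStoch (prepare p) :=
  ⟨fun q _ => hp.1 q.1, fun _ => by simp [prepare, Fintype.sum_prod_type, hp.2]⟩

lemma isStoch_test {τ : X' → ℝ} (h₀ : ∀ x', 0 ≤ τ x') (h₁ : ∀ x', τ x' ≤ 1) :
    IsStoch (test τ) := by
  refine ⟨fun b q => ?_, fun q => ?_⟩
  · cases b <;> simp [test, h₀, h₁]
  · simp [test, Fintype.sum_bool']

variable [Fintype A] [Fintype A'] [Fintype X']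

lemma slideS_detMat_const_fst_apply (c : Bool) (Γ : Matrix (A' × X') (A × Bool) ℝ) (a' : A')
    (w : X') (a : A) (u : Unit) :
    slideS (detMat fun _ : Unit => (c, ())) (detMat Prod.fst) Γ (a', w) (a, u) =
      Γ (a', w) (a, c) := by
  simp [slideS_detMat_apply]

lemma slideS_detMat_comp_fst_apply {e : X' → X'} (he : Function.Involutive e)
    (Γ : Matrix (A' × X') (A × Unit) ℝ) (a' : A') (w : X') (a : A) (u : Unit) :
    slideS (detMat fun _ : Unit => ((), ())) (detMat (e ∘ Prod.fst)) Γ (a', w) (a, u) =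
      Γ (a', e w) (a, ()) := by
  simp [slideS_detMat_apply, eq_comm (a := w), he.eq_iff]

lemma slideS_detMat_const_false_apply (Γ : Matrix (A' × X') (A × Unit) ℝ) (a' : A') (w : Bool)
    (a : A) (u : Unit) :
    slideS (detMat fun _ : Unit => ((), ())) (detMat fun _ : X' × Unit => false) Γ (a', w)
        (a, u) =
      if w = false then ∑ x', Γ (a', x') (a, ()) else 0 := by
  simp [slideS_detMat_apply, Finset.sum_ite_irrel]

lemma slideS_uniformCopy_apply (Γ : Matrix (A' × Bool) (A × Bool) ℝ) (a' : A')
    (w : Bool × Bool) (a : A) (u : Unit) :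
    slideS (uniformCopy Bool) (1 : Matrix (Bool × Bool) (Bool × Bool) ℝ) Γ (a', w) (a, u) =
      (Fintype.card Bool : ℝ)⁻¹ * Γ (a', w.1) (a, w.2) := by
  rw [slideS_apply]
  simp [uniformCopy, Matrix.one_apply, Prod.ext_iff, ite_and, mul_comm]

lemma slideS_detMat_const_fst_controlled (c : Bool) (Ψ₀ Ψ₁ : Matrix (A' × X') (A × Unit) ℝ) :
    slideS (detMat fun _ : Unit => (c, ())) (detMat Prod.fst) (controlled Ψ₀ Ψ₁) =
      cond c Ψ₁ Ψ₀ := by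
  ext ⟨a', w⟩ ⟨a, u⟩
  cases c <;> simp [slideS_detMat_const_fst_apply, controlled]

lemma accepted_slideS_prepare_test {X : Type} [Fintype X] (p : X → ℝ) (τ : X' → ℝ)
    (Γ : Matrix (A' × X') (A × X) ℝ) : accepted (slideS (prepare p) (test τ) Γ) = margE Γ p τ := by
  ext a' a
  simp [accepted, margE, slideS_apply, prepare, test]

end Ancillas

section Transformation

variable {A A' B B' : FintypeCat.{0}} {K : Set (Matrix A' A ℝ)} {M : Set (Matrix B' B ℝ)}
  (S : LocAppS K M)

lemma LocAppS.app_apply_true_false_eq (Ω : dExtS K (FintypeCat.of Bool) (FintypeCat.of Bool))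
    (hΩ : ∀ a' a, Ω.1 (a', true) (a, false) = Ω.1 (a', true) (a, true)) (b' : B') (b : B) :
    (S.app _ _ Ω).1 (b', true) (b, false) = (S.app _ _ Ω).1 (b', true) (b, true) := by
  have hmem := slideS_mem_dExtS (Y := FintypeCat.of Unit) (Y' := FintypeCat.of (Bool × Bool))
    Ω.2 (isStoch_uniformCopy Bool) isStoch_one
  have hΞ := S.app_slideS (Z := FintypeCat.of Bool) (isStoch_uniformCopy Bool) isStoch_one Ω
    ⟨_, hmem⟩ rfl
  have hflip := S.app_slideS (Z := FintypeCat.of Unit) (isStoch_detMat fun _ : Unit => ((), ()))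
    (isStoch_detMat (condFlip ∘ Prod.fst)) ⟨_, hmem⟩ ⟨_, hmem⟩ ?_
  · have h := congrFun (congrFun hflip (b', (true, false))) (b, ())
    rw [slideS_detMat_comp_fst_apply condFlip_involutive, hΞ, slideS_uniformCopy_apply,
      slideS_uniformCopy_apply] at h
    simpa [condFlip] using h
  · ext ⟨a', w, c⟩ ⟨a, u⟩
    simp only [slideS_detMat_comp_fst_apply condFlip_involutive, slideS_uniformCopy_apply,
      condFlip]
    cases w <;> cases c <;> simp [hΩ]

lemma LocAppS.accepted_app_eq (hK : IsConvexSetS K)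
    (Ψ₀ Ψ₁ : dExtS K (FintypeCat.of Unit) (FintypeCat.of Bool))
    (h : accepted Ψ₀.1 = accepted Ψ₁.1) :
    accepted (S.app _ _ Ψ₀).1 = accepted (S.app _ _ Ψ₁).1 := by
  let Ω : dExtS K (FintypeCat.of Bool) (FintypeCat.of Bool) :=
    ⟨controlled Ψ₀.1 Ψ₁.1, controlled_mem_dExtS hK Ψ₀.2 Ψ₁.2⟩
  have hfix (c : Bool) (Ψ : dExtS K (FintypeCat.of Unit) (FintypeCat.of Bool))
      (hΨ : Ψ.1 = cond c Ψ₁.1 Ψ₀.1) (b' : B') (b : B) :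
      accepted (S.app _ _ Ψ).1 b' b = (S.app _ _ Ω).1 (b', true) (b, c) := by
    rw [accepted, Matrix.of_apply, S.app_slideS (Z := FintypeCat.of Unit) (isStoch_detMat _)
      (isStoch_detMat _) Ω Ψ (hΨ.trans (slideS_detMat_const_fst_controlled c _ _).symm),
      slideS_detMat_const_fst_apply]
  ext b' b
  rw [hfix false Ψ₀ rfl, hfix true Ψ₁ rfl]
  refine S.app_apply_true_false_eq Ω (fun a' a => ?_) b' b
  simpa [Ω, controlled, accepted] using congrFun (congrFun h a') a

lemma LocAppS.accepted_app_eq_zero (Ψ : dExtS K (FintypeCat.of Unit) (FintypeCat.of Bool))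
    (h : accepted Ψ.1 = 0) : accepted (S.app _ _ Ψ).1 = 0 := by
  have hΨ := S.app_slideS (Z := FintypeCat.of Unit) (isStoch_detMat fun _ => ((), ()))
    (isStoch_detMat fun _ => false) Ψ Ψ ?_
  · ext b' b
    rw [accepted, Matrix.of_apply, hΨ, slideS_detMat_const_false_apply]
    rfl
  · ext ⟨a', w⟩ ⟨a, u⟩
    have h' := congrFun (congrFun h a') a
    cases w <;> simp_all [slideS_detMat_const_false_apply, accepted, Fintype.sum_bool']

lemma LocAppS.exists_accepted_eq_margE {X X' : FintypeCat.{0}}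
    (Φ : dExtS K X X') {p : X → ℝ} (hp : IsProb p) {τ : X' → ℝ} (hτ₀ : ∀ x', 0 ≤ τ x')
    (hτ₁ : ∀ x', τ x' ≤ 1) :
    ∃ Ψ : dExtS K (FintypeCat.of Unit) (FintypeCat.of Bool),
      accepted Ψ.1 = margE Φ.1 p τ ∧ accepted (S.app _ _ Ψ).1 = margE (S.app _ _ Φ).1 p τ := by
  have hf := isStoch_prepare hp
  have hg := isStoch_test hτ₀ hτ₁
  refine ⟨⟨_, slideS_mem_dExtS Φ.2 hf hg⟩, accepted_slideS_prepare_test p τ Φ.1, ?_⟩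
  rw [S.app_slideS (Z := FintypeCat.of Unit) hf hg Φ _ rfl, accepted_slideS_prepare_test]

lemma LocAppS.exists_accepted_eq_smul_margE {X X' : FintypeCat.{0}}
    (Φ : dExtS K X X') {ρ : X → ℝ} (hρ : ∀ x, 0 ≤ ρ x) {σ : X' → ℝ} (hσ : ∀ x', 0 ≤ σ x')
    (hr : 0 < ∑ x, ρ x) {t : ℝ} (ht : (∑ x, ρ x) * ∑ x', σ x' < t) :
    ∃ Ψ : dExtS K (FintypeCat.of Unit) (FintypeCat.of Bool),
      accepted Ψ.1 = t⁻¹ • margE Φ.1 ρ σ ∧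
        accepted (S.app _ _ Ψ).1 = t⁻¹ • margE (S.app _ _ Φ).1 ρ σ := by
  set r := ∑ x, ρ x
  have ht₀ : 0 < t :=
    lt_of_le_of_lt (mul_nonneg hr.le (Finset.sum_nonneg fun x' _ => hσ x')) ht
  have hscale : r⁻¹ * (r / t) = t⁻¹ := by field_simp
  have hp : IsProb (r⁻¹ • ρ) :=
    ⟨fun x => mul_nonneg (inv_nonneg.2 hr.le) (hρ x),
      by simp only [Pi.smul_apply, smul_eq_mul, ← Finset.mul_sum, inv_mul_cancel₀ hr.ne', r]⟩
  have hτ₁ (x' : X') : (r / t) • σ x' ≤ 1 := by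
    rw [smul_eq_mul, div_mul_eq_mul_div, div_le_one ht₀]
    exact (mul_le_mul_of_nonneg_left (Finset.single_le_sum (fun y _ => hσ y)
      (Finset.mem_univ x')) hr.le).trans ht.le
  obtain ⟨Ψ, h, hS⟩ := S.exists_accepted_eq_margE Φ hp
    (τ := (r / t) • σ) (fun x' => mul_nonneg (div_nonneg hr.le ht₀.le) (hσ x')) hτ₁
  exact ⟨Ψ, by rwa [margE_smul_smul, hscale] at h, by rwa [margE_smul_smul, hscale] at hS⟩

lemma LocAppS.margE_app_eq_zero {X X' : FintypeCat.{0}} (Φ : dExtS K X X')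
    {ρ : X → ℝ} (hρ : ∀ x, 0 ≤ ρ x) {σ : X' → ℝ} (hσ : ∀ x', 0 ≤ σ x')
    (h : margE Φ.1 ρ σ = 0) : margE (S.app _ _ Φ).1 ρ σ = 0 := by
  rcases (Finset.sum_nonneg fun x _ => hρ x).eq_or_lt with hr | hr
  · exact margE_eq_zero_of_sum_eq_zero _ hρ hr.symm σ
  have hs : 0 ≤ (∑ x, ρ x) * ∑ x', σ x' :=
    mul_nonneg hr.le (Finset.sum_nonneg fun x' _ => hσ x')
  obtain ⟨Ψ, hΨ, hSΨ⟩ := S.exists_accepted_eq_smul_margE Φ hρ hσ hr (lt_add_one _)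
  rw [h, smul_zero] at hΨ
  rw [S.accepted_app_eq_zero Ψ hΨ, eq_comm, smul_eq_zero] at hSΨ
  exact hSΨ.resolve_left (inv_ne_zero (by linarith))

lemma LocAppS.margE_app_eq_of_sum_pos (hK : IsConvexSetS K) {X X' Y Y' : FintypeCat.{0}}
    (Φ : dExtS K X X') (Φ' : dExtS K Y Y')
    {ρ : X → ℝ} (hρ : ∀ x, 0 ≤ ρ x) {σ : X' → ℝ} (hσ : ∀ x', 0 ≤ σ x')
    {ρ' : Y → ℝ} (hρ' : ∀ y, 0 ≤ ρ' y) {σ' : Y' → ℝ} (hσ' : ∀ y', 0 ≤ σ' y')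
    (hr : 0 < ∑ x, ρ x) (hr' : 0 < ∑ y, ρ' y) (h : margE Φ.1 ρ σ = margE Φ'.1 ρ' σ') :
    margE (S.app _ _ Φ).1 ρ σ = margE (S.app _ _ Φ').1 ρ' σ' := by
  set s := (∑ x, ρ x) * ∑ x', σ x'
  set s' := (∑ y, ρ' y) * ∑ y', σ' y'
  have hs : 0 ≤ s := mul_nonneg hr.le (Finset.sum_nonneg fun x' _ => hσ x')
  have hs' : 0 ≤ s' := mul_nonneg hr'.le (Finset.sum_nonneg fun y' _ => hσ' y')
  obtain ⟨Ψ, hΨ, hSΨ⟩ := S.exists_accepted_eq_smul_margE Φ hρ hσ hr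
    (t := s + s' + 1) (by linarith)
  obtain ⟨Ψ', hΨ', hSΨ'⟩ := S.exists_accepted_eq_smul_margE Φ' hρ' hσ' hr'
    (t := s + s' + 1) (by linarith)
  have := S.accepted_app_eq hK Ψ Ψ' (by rw [hΨ, hΨ', h])
  rw [hSΨ, hSΨ'] at this
  exact smul_right_injective _ (inv_ne_zero (by linarith)) this

end Transformation

theorem stoch_locApp_extends_to_operational_closure_general (A A' B B' : FintypeCat.{0})
    (K : Set (Matrix A' A ℝ)) (M : Set (Matrix B' B ℝ))
    (hKconv : IsConvexSetS K)
    (S : LocAppS K M) (X X' Y Y' : FintypeCat.{0})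
    (Φ : ↥(dExtS K X X')) (Φ' : ↥(dExtS K Y Y'))
    (ρ : X → ℝ) (hρ : ∀ x, 0 ≤ ρ x) (ρ' : Y → ℝ) (hρ' : ∀ y, 0 ≤ ρ' y)
    (σ : X' → ℝ) (hσ : ∀ x', 0 ≤ σ x') (σ' : Y' → ℝ) (hσ' : ∀ y', 0 ≤ σ' y')
    (heq : margE Φ.1 ρ σ = margE Φ'.1 ρ' σ') :
    margE (S.app X X' Φ).1 ρ σ = margE (S.app Y Y' Φ').1 ρ' σ' := by
  rcases (Finset.sum_nonneg fun x _ => hρ x).eq_or_lt with hr | hr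
  · rw [margE_eq_zero_of_sum_eq_zero _ hρ hr.symm] at heq ⊢
    exact (S.margE_app_eq_zero Φ' hρ' hσ' heq.symm).symm
  rcases (Finset.sum_nonneg fun y _ => hρ' y).eq_or_lt with hr' | hr'
  · rw [margE_eq_zero_of_sum_eq_zero _ hρ' hr'.symm] at heq ⊢
    exact S.margE_app_eq_zero Φ hρ hσ heq
  exact S.margE_app_eq_of_sum_pos hKconv Φ Φ' hρ hσ hρ' hσ' hr hr' heq

/-- **Statement 14.** Every locally-applicable transformation between convex sets of
column-stochastic matrices extends to a well-defined function on the operational closure: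
whenever two state/effect reductions of members of dilation extensions of `K` agree, the
corresponding reductions of their images agree. -/
theorem stoch_locApp_extends_to_operational_closure (A A' B B' : FintypeCat.{0})
    (K : Set (Matrix A' A ℝ)) (M : Set (Matrix B' B ℝ))
    (hK : ∀ φ ∈ K, IsStoch φ) (hM : ∀ φ ∈ M, IsStoch φ)
    (hKconv : IsConvexSetS K) (hMconv : IsConvexSetS M)
    (S : LocAppS K M) (X X' Y Y' : FintypeCat.{0})
    (Φ : ↥(dExtS K X X')) (Φ' : ↥(dExtS K Y Y'))
    (ρ : X → ℝ) (hρ : ∀ x, 0 ≤ ρ x) (ρ' : Y → ℝ) (hρ' : ∀ y, 0 ≤ ρ' y)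
    (σ : X' → ℝ) (hσ : ∀ x', 0 ≤ σ x') (σ' : Y' → ℝ) (hσ' : ∀ y', 0 ≤ σ' y')
    (heq : margE Φ.1 ρ σ = margE Φ'.1 ρ' σ') :
    margE (S.app X X' Φ).1 ρ σ = margE (S.app Y Y' Φ').1 ρ' σ' :=
  stoch_locApp_extends_to_operational_closure_general A A' B B' K M hKconv S X X' Y Y' Φ Φ' ρ hρ ρ'
    hρ' σ hσ σ' hσ' heq
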